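/- arXiv:2008.06677 — 2 statements merged into one kernel-verified Lean document; each statement's English description precedes it below -/
import Mathlib

section
/- Let n, m ≥ 1, let ξ ∈ ℝⁿ, let Ω ∈ ℝ^{n×n} be positive definite, and let W ∈ ℝ^{m×n}. Then the marginal likelihood of the affine probit model under a normal prior equals a single multivariate normal CDF: ∫_{ℝⁿ} Φ_m(W f) · φ_n(f − ξ; Ω) df = Φ_m(W ξ; W Ω Wᵀ + I_m). -/
/-!
Write `Φ_m(W f)` as the integral of `φ_m(s + W f)` over `s ≤ 0` and exchange the order of
integration. For fixed `s`, completing the square with `A = Ω⁻¹ + WᵀW`,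
`|s + W f|² + fᵀ Ω⁻¹ f = (f + c)ᵀ A (f + c) + sᵀ (I - W A⁻¹ Wᵀ) s`,
turns the integral over `f` into a Gaussian integral. The Woodbury identity
`I - W A⁻¹ Wᵀ = (W Ω Wᵀ + I)⁻¹` and Sylvester's determinant identity
`det (W Ω Wᵀ + I) = det Ω · det A` then identify it with `φ_m(s + W ξ; W Ω Wᵀ + I)`.
-/

open MeasureTheory Real Matrix

/-- Centered multivariate normal density with covariance `S`. -/
noncomputable def gaussPdf {ι : Type*} [Fintype ι] [DecidableEq ι]
    (S : Matrix ι ι ℝ) (x : ι → ℝ) : ℝ :=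
  (2 * π) ^ (-(Fintype.card ι : ℝ) / 2) * S.det ^ (-(1 : ℝ) / 2) *
    Real.exp (-(1 / 2) * (x ⬝ᵥ S⁻¹.mulVec x))

/-- Centered multivariate normal CDF with covariance `S`, evaluated at `a`. -/
noncomputable def gaussCdf {ι : Type*} [Fintype ι] [DecidableEq ι]
    (S : Matrix ι ι ℝ) (a : ι → ℝ) : ℝ :=
  ∫ t in {t : ι → ℝ | ∀ i, t i ≤ a i}, gaussPdf S t

/-- `D_Ω`: diagonal matrix of square roots of the diagonal of `Ω`. -/
noncomputable def matD {ι : Type*} [Fintype ι] [DecidableEq ι]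
    (Ω : Matrix ι ι ℝ) : Matrix ι ι ℝ :=
  Matrix.diagonal fun i => Real.sqrt (Ω i i)

/-- `Ω̄`: the correlation matrix of `Ω`, so that `Ω = D_Ω Ω̄ D_Ω`. -/
noncomputable def matCorr {ι : Type*} [Fintype ι] [DecidableEq ι]
    (Ω : Matrix ι ι ℝ) : Matrix ι ι ℝ :=
  (matD Ω)⁻¹ * Ω * (matD Ω)⁻¹

/-- Unified skew-normal `SUN(ξ, Ω, Δ, γ, Γ)` density. -/
noncomputable def sunPdf {ι κ : Type*} [Fintype ι] [DecidableEq ι] [Fintype κ] [DecidableEq κ]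
    (ξ : ι → ℝ) (Ω : Matrix ι ι ℝ) (Δ : Matrix ι κ ℝ) (γ : κ → ℝ) (Γ : Matrix κ κ ℝ)
    (z : ι → ℝ) : ℝ :=
  gaussPdf Ω (z - ξ) *
    gaussCdf (Γ - Δᵀ * (matCorr Ω)⁻¹ * Δ)
      (γ + (Δᵀ * (matCorr Ω)⁻¹ * (matD Ω)⁻¹).mulVec (z - ξ)) /
  gaussCdf Γ γ

/-- Standard univariate normal CDF `Φ₁`. -/
noncomputable def stdNormalCdf (a : ℝ) : ℝ :=
  ∫ t in Set.Iic a, (2 * π) ^ (-(1 : ℝ) / 2) * Real.exp (-(t ^ 2) / 2)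

lemma setIntegral_Iic_eq_setIntegral_Iic_zero_add {G : Type*} [AddCommGroup G] [PartialOrder G]
    [IsOrderedAddMonoid G] [MeasurableSpace G] [MeasurableAdd G] (μ : Measure G)
    [μ.IsAddRightInvariant] (g : G → ℝ) (a : G) :
    ∫ t in Set.Iic a, g t ∂μ = ∫ s in Set.Iic 0, g (s + a) ∂μ := by
  rw [← (measurePreserving_add_right μ a).setIntegral_preimage_emb
    (measurableEmbedding_addRight a), Set.preimage_add_const_Iic, sub_self]

section GaussianIntegral

variable {ι : Type*} [Fintype ι]

lemma integral_exp_neg_half_dotProduct_self :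
    ∫ x : ι → ℝ, exp (-(1 / 2) * (x ⬝ᵥ x)) = (2 * π) ^ ((Fintype.card ι : ℝ) / 2) := by
  have hprod (x : ι → ℝ) : exp (-(1 / 2) * (x ⬝ᵥ x)) = ∏ i, exp (-(1 / 2) * x i ^ 2) := by
    simp only [← Real.exp_sum, dotProduct, Finset.mul_sum, sq]
  simp_rw [hprod]
  rw [integral_fintype_prod_volume_eq_pow (fun t : ℝ => exp (-(1 / 2) * t ^ 2)), integral_gaussian,
    div_div_eq_mul_div, div_one, mul_comm, sqrt_eq_rpow, ← rpow_natCast, ← rpow_mul (by positivity)]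
  ring_nf

variable [DecidableEq ι]

lemma integral_comp_mulVec {g : (ι → ℝ) → ℝ} (hg : AEStronglyMeasurable g) {M : Matrix ι ι ℝ}
    (hM : M.det ≠ 0) : ∫ x, g (M *ᵥ x) = |M.det|⁻¹ * ∫ x, g x := by
  have hmap := Real.map_matrix_volume_pi_eq_smul_volume_pi hM
  have hM : Measurable (toLin' M) := (LinearMap.continuous_of_finiteDimensional _).measurable
  rw [← abs_inv, ← ENNReal.toReal_ofReal (abs_nonneg M.det⁻¹), ← smul_eq_mul,
    ← integral_smul_measure, ← hmap, integral_map hM.aemeasurable (hmap ▸ hg.smul_measure _)]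
  rfl

lemma integral_exp_neg_half_dotProduct_mulVec {A : Matrix ι ι ℝ} (hA : A.PosDef) :
    ∫ x : ι → ℝ, exp (-(1 / 2) * (x ⬝ᵥ A *ᵥ x)) =
      (2 * π) ^ ((Fintype.card ι : ℝ) / 2) * A.det ^ (-(1 : ℝ) / 2) := by
  open scoped MatrixOrder in
  obtain ⟨B, rfl⟩ := CStarAlgebra.nonneg_iff_eq_star_mul_self.mp hA.posSemidef.nonneg
  rw [star_eq_conjTranspose, conjTranspose_eq_transpose_of_trivial] at hA ⊢
  have hdet : (Bᵀ * B).det = |B.det| * |B.det| := by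
    rw [det_mul, det_transpose, abs_mul_abs_self]
  have hB : B.det ≠ 0 := by
    have := hA.det_pos
    rw [det_mul, det_transpose] at this
    exact left_ne_zero_of_mul this.ne'
  have hquad (x : ι → ℝ) : x ⬝ᵥ (Bᵀ * B) *ᵥ x = B *ᵥ x ⬝ᵥ B *ᵥ x := by
    rw [← mulVec_mulVec, dotProduct_mulVec, vecMul_transpose]
  have hcont : Continuous fun y : ι → ℝ => exp (-(1 / 2) * (y ⬝ᵥ y)) := by fun_prop
  simp_rw [hquad]
  rw [integral_comp_mulVec (g := fun y => exp (-(1 / 2) * (y ⬝ᵥ y)))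
      hcont.aestronglyMeasurable hB, integral_exp_neg_half_dotProduct_self, hdet, ← sq,
    ← rpow_natCast, ← rpow_mul (abs_nonneg _)]
  norm_num [rpow_neg_one, mul_comm]

lemma integrable_exp_neg_half_dotProduct_mulVec {A : Matrix ι ι ℝ} (hA : A.PosDef) :
    Integrable fun x : ι → ℝ => exp (-(1 / 2) * (x ⬝ᵥ A *ᵥ x)) :=
  .of_integral_ne_zero <| by
    rw [integral_exp_neg_half_dotProduct_mulVec hA]
    have := hA.det_pos
    positivity

end GaussianIntegral

section LinearAlgebra

variable {ι κ : Type*} [Fintype ι] [DecidableEq ι] [Fintype κ] {Ω : Matrix ι ι ℝ}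
  (W : Matrix κ ι ℝ)

lemma Matrix.PosDef.inv_add_transpose_mul_self (hΩ : Ω.PosDef) : (Ω⁻¹ + Wᵀ * W).PosDef :=
  hΩ.inv.add_posSemidef <| by simpa using posSemidef_conjTranspose_mul_self W

variable [DecidableEq κ]

lemma add_mulVec_dotProduct_self_add_dotProduct_mulVec {Q : Matrix ι ι ℝ} (hQ : Qᵀ = Q)
    (hA : IsUnit (Q + Wᵀ * W).det) (s : κ → ℝ) (f : ι → ℝ) :
    (s + W *ᵥ f) ⬝ᵥ (s + W *ᵥ f) + f ⬝ᵥ Q *ᵥ f =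
      (f + ((Q + Wᵀ * W)⁻¹ * Wᵀ) *ᵥ s) ⬝ᵥ (Q + Wᵀ * W) *ᵥ (f + ((Q + Wᵀ * W)⁻¹ * Wᵀ) *ᵥ s) +
        s ⬝ᵥ (1 - W * (Q + Wᵀ * W)⁻¹ * Wᵀ) *ᵥ s := by
  set A := Q + Wᵀ * W with hAdef
  have hAt : Aᵀ = A := by simp [A, hQ]
  have hAc : A *ᵥ ((A⁻¹ * Wᵀ) *ᵥ s) = Wᵀ *ᵥ s := by
    rw [mulVec_mulVec, ← Matrix.mul_assoc, mul_nonsing_inv _ hA, Matrix.one_mul]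
  have hWAW : s ⬝ᵥ (W * A⁻¹ * Wᵀ) *ᵥ s = (A⁻¹ * Wᵀ) *ᵥ s ⬝ᵥ Wᵀ *ᵥ s := by
    rw [Matrix.mul_assoc, ← mulVec_mulVec, dotProduct_transpose_mulVec]
  generalize (A⁻¹ * Wᵀ) *ᵥ s = c at hAc hWAW ⊢
  have hfAf : f ⬝ᵥ A *ᵥ f = f ⬝ᵥ Q *ᵥ f + W *ᵥ f ⬝ᵥ W *ᵥ f := by
    rw [hAdef, add_mulVec, dotProduct_add, ← mulVec_mulVec, dotProduct_transpose_mulVec]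
  have hcAf : c ⬝ᵥ A *ᵥ f = f ⬝ᵥ Wᵀ *ᵥ s := by
    simpa [← hAc, hAt] using dotProduct_transpose_mulVec A c f
  simp only [dotProduct_add, add_dotProduct, mulVec_add, sub_mulVec, dotProduct_sub, one_mulVec,
    hAc]
  linear_combination -hfAf - hcAf - 2 * dotProduct_transpose_mulVec W f s + hWAW +
    dotProduct_comm (W *ᵥ f) s

lemma det_mul_mul_transpose_add_one (hΩ : IsUnit Ω.det) :
    (W * Ω * Wᵀ + 1).det = Ω.det * (Ω⁻¹ + Wᵀ * W).det := by
  rw [det_mul_add_one_comm, ← Matrix.mul_assoc, det_mul_add_one_comm, ← det_mul, Matrix.mul_add,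
    mul_nonsing_inv _ hΩ, add_comm]

lemma inv_mul_mul_transpose_add_one (hΩ : IsUnit Ω.det) (hA : IsUnit (Ω⁻¹ + Wᵀ * W).det) :
    (W * Ω * Wᵀ + 1)⁻¹ = 1 - W * (Ω⁻¹ + Wᵀ * W)⁻¹ * Wᵀ := by
  rw [add_comm, add_mul_mul_inv_eq_sub _ _ _ _ isUnit_one ((isUnit_iff_isUnit_det _).mpr hΩ)]
  · simp
  · simpa using (isUnit_iff_isUnit_det _).mpr hA

end LinearAlgebra

section GaussPdf

variable {ι κ : Type*} [Fintype ι] [DecidableEq ι] [Fintype κ] [DecidableEq κ]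

lemma gaussPdf_one (u : κ → ℝ) :
    gaussPdf 1 u = (2 * π) ^ (-(Fintype.card κ : ℝ) / 2) * exp (-(1 / 2) * (u ⬝ᵥ u)) := by
  simp [gaussPdf]

lemma integral_gaussPdf_one_add_mulVec_mul_gaussPdf {Ω : Matrix ι ι ℝ} (hΩ : Ω.PosDef)
    (W : Matrix κ ι ℝ) (s : κ → ℝ) :
    ∫ f, gaussPdf 1 (s + W *ᵥ f) * gaussPdf Ω f = gaussPdf (W * Ω * Wᵀ + 1) s := by
  set A := Ω⁻¹ + Wᵀ * W
  have hA : A.PosDef := hΩ.inv_add_transpose_mul_self W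
  have hΩu : IsUnit Ω.det := hΩ.det_pos.ne'.isUnit
  have hAu : IsUnit A.det := hA.det_pos.ne'.isUnit
  have hpt (f : ι → ℝ) : gaussPdf 1 (s + W *ᵥ f) * gaussPdf Ω f =
      (2 * π) ^ (-(Fintype.card κ : ℝ) / 2) * (2 * π) ^ (-(Fintype.card ι : ℝ) / 2) *
        Ω.det ^ (-(1 : ℝ) / 2) * exp (-(1 / 2) * (s ⬝ᵥ (W * Ω * Wᵀ + 1)⁻¹ *ᵥ s)) *
        exp (-(1 / 2) * ((f + (A⁻¹ * Wᵀ) *ᵥ s) ⬝ᵥ A *ᵥ (f + (A⁻¹ * Wᵀ) *ᵥ s))) := by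
    have hsq := add_mulVec_dotProduct_self_add_dotProduct_mulVec W
      (by simpa using hΩ.inv.isHermitian.eq) hAu s f
    rw [← inv_mul_mul_transpose_add_one W hΩu hAu] at hsq
    have hexp :
        exp (-(1 / 2) * ((s + W *ᵥ f) ⬝ᵥ (s + W *ᵥ f))) * exp (-(1 / 2) * (f ⬝ᵥ Ω⁻¹ *ᵥ f)) =
        exp (-(1 / 2) * (s ⬝ᵥ (W * Ω * Wᵀ + 1)⁻¹ *ᵥ s)) *
          exp (-(1 / 2) * ((f + (A⁻¹ * Wᵀ) *ᵥ s) ⬝ᵥ A *ᵥ (f + (A⁻¹ * Wᵀ) *ᵥ s))) := by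
      rw [← exp_add, ← exp_add, ← mul_add, ← mul_add, hsq, add_comm]
    rw [gaussPdf_one, gaussPdf]
    linear_combination (2 * π) ^ (-(Fintype.card κ : ℝ) / 2) *
      (2 * π) ^ (-(Fintype.card ι : ℝ) / 2) * Ω.det ^ (-(1 : ℝ) / 2) * hexp
  have h2π :
      (2 * π) ^ (-(Fintype.card ι : ℝ) / 2) * (2 * π) ^ ((Fintype.card ι : ℝ) / 2) = 1 := by
    rw [← rpow_add (by positivity), neg_div, neg_add_cancel, rpow_zero]
  simp_rw [hpt]
  rw [integral_const_mul, integral_add_right_eq_self (fun y => exp (-(1 / 2) * (y ⬝ᵥ A *ᵥ y))),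
    integral_exp_neg_half_dotProduct_mulVec hA, gaussPdf, det_mul_mul_transpose_add_one W hΩu,
    mul_rpow hΩ.det_pos.le hA.det_pos.le]
  linear_combination (2 * π) ^ (-(Fintype.card κ : ℝ) / 2) * Ω.det ^ (-(1 : ℝ) / 2) *
    A.det ^ (-(1 : ℝ) / 2) * exp (-(1 / 2) * (s ⬝ᵥ (W * Ω * Wᵀ + 1)⁻¹ *ᵥ s)) * h2π

lemma integrable_gaussPdf {S : Matrix ι ι ℝ} (hS : S.PosDef) : Integrable (gaussPdf S) :=
  (integrable_exp_neg_half_dotProduct_mulVec hS.inv).const_mul _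

lemma integral_gaussPdf_one_add_mulVec_mul_gaussPdf_sub {Ω : Matrix ι ι ℝ} (hΩ : Ω.PosDef)
    (W : Matrix κ ι ℝ) (ξ : ι → ℝ) (s : κ → ℝ) :
    ∫ f, gaussPdf 1 (s + W *ᵥ f) * gaussPdf Ω (f - ξ) =
      gaussPdf (W * Ω * Wᵀ + 1) (s + W *ᵥ ξ) := by
  rw [← integral_add_right_eq_self _ ξ, ← integral_gaussPdf_one_add_mulVec_mul_gaussPdf hΩ]
  simp only [mulVec_add, add_sub_cancel_right, ← add_assoc, add_right_comm s]

lemma integrable_gaussPdf_one_add_mulVec_mul_gaussPdf_sub {Ω : Matrix ι ι ℝ} (hΩ : Ω.PosDef)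
    (W : Matrix κ ι ℝ) (ξ : ι → ℝ) :
    Integrable (fun p : (ι → ℝ) × (κ → ℝ) => gaussPdf 1 (p.2 + W *ᵥ p.1) * gaussPdf Ω (p.1 - ξ))
      (volume.prod volume) := by
  have hprod : Integrable (fun p : (ι → ℝ) × (κ → ℝ) => gaussPdf Ω (p.1 - ξ) * gaussPdf 1 p.2)
      (volume.prod volume) :=
    ((integrable_gaussPdf hΩ).comp_sub_right ξ).mul_prod (integrable_gaussPdf .one)
  have hshear : MeasurePreserving (fun p : (ι → ℝ) × (κ → ℝ) => (p.1, p.2 + W *ᵥ p.1))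
      (volume.prod volume) (volume.prod volume) :=
    (MeasurePreserving.id volume).skew_product (g := fun f s => s + W *ᵥ f) (by fun_prop)
      (ae_of_all _ fun f => (measurePreserving_add_right volume (W *ᵥ f)).map_eq)
  simpa only [Function.comp_def, mul_comm] using
    (hshear.integrable_comp hprod.aestronglyMeasurable).mpr hprod

lemma gaussCdf_eq_setIntegral_Iic_zero (S : Matrix κ κ ℝ) (a : κ → ℝ) :
    gaussCdf S a = ∫ s in Set.Iic 0, gaussPdf S (s + a) :=
  setIntegral_Iic_eq_setIntegral_Iic_zero_add volume _ _

end GaussPdf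

theorem affine_probit_marginal_likelihood_general (n m : ℕ)
    (ξ : Fin n → ℝ) (Ω : Matrix (Fin n) (Fin n) ℝ) (hΩ : Ω.PosDef)
    (W : Matrix (Fin m) (Fin n) ℝ) :
    ∫ f : Fin n → ℝ,
        gaussCdf (1 : Matrix (Fin m) (Fin m) ℝ) (W.mulVec f) * gaussPdf Ω (f - ξ) =
      gaussCdf (W * Ω * Wᵀ + 1) (W.mulVec ξ) := by
  calc ∫ f, gaussCdf 1 (W *ᵥ f) * gaussPdf Ω (f - ξ)
      = ∫ f, ∫ s in Set.Iic 0, gaussPdf 1 (s + W *ᵥ f) * gaussPdf Ω (f - ξ) := by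
        simp only [gaussCdf_eq_setIntegral_Iic_zero, integral_mul_const]
    _ = ∫ s in Set.Iic 0, ∫ f, gaussPdf 1 (s + W *ᵥ f) * gaussPdf Ω (f - ξ) :=
        integral_integral_swap <|
          (integrable_gaussPdf_one_add_mulVec_mul_gaussPdf_sub hΩ W ξ).mono_measure
            (Measure.prod_mono le_rfl Measure.restrict_le_self)
    _ = ∫ s in Set.Iic 0, gaussPdf (W * Ω * Wᵀ + 1) (s + W *ᵥ ξ) := by
        simp only [integral_gaussPdf_one_add_mulVec_mul_gaussPdf_sub hΩ]
    _ = gaussCdf (W * Ω * Wᵀ + 1) (W *ᵥ ξ) :=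
        (gaussCdf_eq_setIntegral_Iic_zero _ _).symm

/-- the marginal likelihood of the affine probit model under a normal prior
equals a single multivariate normal CDF:
`∫ Φ_m(W f) φ_n(f − ξ; Ω) df = Φ_m(W ξ; W Ω Wᵀ + I_m)`. -/
theorem affine_probit_marginal_likelihood (n m : ℕ) (hn : 1 ≤ n) (hm : 1 ≤ m)
    (ξ : Fin n → ℝ) (Ω : Matrix (Fin n) (Fin n) ℝ) (hΩ : Ω.PosDef)
    (W : Matrix (Fin m) (Fin n) ℝ) :
    ∫ f : Fin n → ℝ,
        gaussCdf (1 : Matrix (Fin m) (Fin m) ℝ) (W.mulVec f) * gaussPdf Ω (f - ξ) =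
      gaussCdf (W * Ω * Wᵀ + 1) (W.mulVec ξ) :=
  affine_probit_marginal_likelihood_general n m ξ Ω hΩ W
end

section
/- Additive representation of the unified skew-normal (density form of the sampling scheme): let (ξ, Ω, Δ, γ, Γ) be unified skew-normal parameters with Ω = D_Ω Ω̄ D_Ω positive definite, Γ positive definite, M = [[Γ, Δᵀ],[Δ, Ω̄]] positive definite, and Φ_s(γ; Γ) > 0. Let u₀ have density φ_p(·; Ω̄ − Δ Γ⁻¹ Δᵀ) and let u₁ have the density of N_s(0, Γ) truncated componentwise below −γ, i.e., t ↦ 1_{{t + γ > 0}} φ_s(t; Γ)/Φ_s(γ; Γ), independent of u₀. Then the density of z := ξ + D_Ω (u₀ + Δ Γ⁻¹ u₁) is the SUN_{p,s}(ξ, Ω, Δ, γ, Γ) density; equivalently, for every z ∈ ℝ^p, (det D_Ω)⁻¹ ∫_{{t ∈ ℝ^s : t + γ > 0}} φ_p(D_Ω⁻¹(z − ξ) − Δ Γ⁻¹ t; Ω̄ − Δ Γ⁻¹ Δᵀ) · φ_s(t; Γ)/Φ_s(γ; Γ) dt = sun(z). -/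
/-!
Put `x = D_Ω⁻¹ (z - ξ)`. The product `φ_p(x - Δ Γ⁻¹ t; Ω̄ - Δ Γ⁻¹ Δᵀ) φ_s(t; Γ)` and the product
`φ_p(x; Ω̄) φ_s(t - Δᵀ Ω̄⁻¹ x; Γ - Δᵀ Ω̄⁻¹ Δ)` are the two factorisations of the `N(0, M)` density
of `(t, x)`: their determinants agree by the two Schur-complement expansions of `det M`, and their
exponents by completing the square in either variable. Integrating the second factorisation over
`t + γ > 0` leaves `φ_p(x; Ω̄)` times a Gaussian CDF at `γ + Δᵀ Ω̄⁻¹ x`, and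
`φ_p(x; Ω̄) / det D_Ω = φ_p(z - ξ; Ω)`.
-/

open MeasureTheory Real Matrix

namespace Matrix.PosDef

open scoped ComplexOrder

variable {m n 𝕜 : Type*} [Fintype m] [DecidableEq m] [Fintype n] [DecidableEq n] [RCLike 𝕜]

theorem fromBlocks₁₁_schur {A : Matrix m m 𝕜} {B : Matrix m n 𝕜} {D : Matrix n n 𝕜}
    (hA : A.PosDef) (h : (fromBlocks A B Bᴴ D).PosDef) : (D - Bᴴ * A⁻¹ * B).PosDef := by
  let _ := hA.isUnit.invertible
  refine ((PosDef.fromBlocks₁₁ B D hA).mp h.posSemidef).posDef_iff_det_ne_zero.mpr ?_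
  have hdet := h.det_pos.ne'
  rw [det_fromBlocks₁₁, invOf_eq_nonsing_inv] at hdet
  exact right_ne_zero_of_mul hdet

theorem fromBlocks₂₂_schur {A : Matrix m m 𝕜} {B : Matrix m n 𝕜} {D : Matrix n n 𝕜}
    (hD : D.PosDef) (h : (fromBlocks A B Bᴴ D).PosDef) : (A - B * D⁻¹ * Bᴴ).PosDef := by
  let _ := hD.isUnit.invertible
  refine ((PosDef.fromBlocks₂₂ A B hD).mp h.posSemidef).posDef_iff_det_ne_zero.mpr ?_
  have hdet := h.det_pos.ne'
  rw [det_fromBlocks₂₂, invOf_eq_nonsing_inv] at hdet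
  exact right_ne_zero_of_mul hdet

end Matrix.PosDef

namespace Matrix

variable {ι κ R : Type*} [Fintype ι] [Fintype κ] [DecidableEq κ] [CommRing R]

theorem det_sub_mul_inv_mul_transpose_mul_det [DecidableEq ι] {O : Matrix ι ι R} {Γ : Matrix κ κ R}
    (hO : IsUnit O.det) (hΓ : IsUnit Γ.det) (Δ : Matrix ι κ R) :
    (O - Δ * Γ⁻¹ * Δᵀ).det * Γ.det = O.det * (Γ - Δᵀ * O⁻¹ * Δ).det := by
  let _ := Γ.invertibleOfIsUnitDet hΓ
  let _ := O.invertibleOfIsUnitDet hO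
  have hdet := det_fromBlocks₁₁ Γ Δᵀ Δ O
  rw [det_fromBlocks₂₂, invOf_eq_nonsing_inv, invOf_eq_nonsing_inv] at hdet
  rw [mul_comm, ← hdet]

theorem sub_mul_inv_mul_transpose_mulVec {A : Matrix κ κ R} (hA : IsUnit A.det)
    (C : Matrix ι κ R) (D : Matrix ι ι R) {α t : κ → R} {β x : ι → R}
    (ht : A *ᵥ α + Cᵀ *ᵥ β = t) (hx : C *ᵥ α + D *ᵥ β = x) :
    (D - C * A⁻¹ * Cᵀ) *ᵥ β = x - (C * A⁻¹) *ᵥ t := by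
  rw [← ht, ← hx]
  simp only [mulVec_add, sub_mulVec, mulVec_mulVec, Matrix.mul_assoc, nonsing_inv_mul _ hA,
    Matrix.mul_one]
  abel

theorem schur_quad_add_quad_eq_of_blocks [DecidableEq ι] {A : Matrix κ κ R} (hAt : A.IsSymm)
    (hA : IsUnit A.det) {C : Matrix ι κ R} {D : Matrix ι ι R} (hS : IsUnit (D - C * A⁻¹ * Cᵀ).det)
    {α t : κ → R} {β x : ι → R} (ht : A *ᵥ α + Cᵀ *ᵥ β = t) (hx : C *ᵥ α + D *ᵥ β = x) :
    (x - (C * A⁻¹) *ᵥ t) ⬝ᵥ (D - C * A⁻¹ * Cᵀ)⁻¹ *ᵥ (x - (C * A⁻¹) *ᵥ t) + t ⬝ᵥ A⁻¹ *ᵥ t =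
      t ⬝ᵥ α + x ⬝ᵥ β := by
  have hβ : (D - C * A⁻¹ * Cᵀ)⁻¹ *ᵥ (x - (C * A⁻¹) *ᵥ t) = β := by
    rw [← sub_mul_inv_mul_transpose_mulVec hA C D ht hx, mulVec_mulVec, nonsing_inv_mul _ hS,
      one_mulVec]
  have hα : A⁻¹ *ᵥ t = α + (A⁻¹ * Cᵀ) *ᵥ β := by
    rw [← ht, mulVec_add, mulVec_mulVec, nonsing_inv_mul _ hA, one_mulVec, mulVec_mulVec]
  have hsymm : (C * A⁻¹) *ᵥ t ⬝ᵥ β = t ⬝ᵥ (A⁻¹ * Cᵀ) *ᵥ β := by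
    rw [dotProduct_comm, dotProduct_mulVec, ← mulVec_transpose, transpose_mul,
      transpose_nonsing_inv, hAt.eq, dotProduct_comm]
  rw [hβ, hα, sub_dotProduct, hsymm, dotProduct_add]
  ring

theorem schur_quad_add_quad_eq_quad_add_schur_quad [DecidableEq ι] {O : Matrix ι ι R}
    {Γ : Matrix κ κ R} (hOt : O.IsSymm) (hΓt : Γ.IsSymm) (hO : IsUnit O.det) (hΓ : IsUnit Γ.det)
    {Δ : Matrix ι κ R}
    (hΨ : IsUnit (O - Δ * Γ⁻¹ * Δᵀ).det) (hΛ : IsUnit (Γ - Δᵀ * O⁻¹ * Δ).det)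
    (x : ι → R) (t : κ → R) :
    (x - (Δ * Γ⁻¹) *ᵥ t) ⬝ᵥ (O - Δ * Γ⁻¹ * Δᵀ)⁻¹ *ᵥ (x - (Δ * Γ⁻¹) *ᵥ t) + t ⬝ᵥ Γ⁻¹ *ᵥ t =
      x ⬝ᵥ O⁻¹ *ᵥ x +
        (t - (Δᵀ * O⁻¹) *ᵥ x) ⬝ᵥ (Γ - Δᵀ * O⁻¹ * Δ)⁻¹ *ᵥ (t - (Δᵀ * O⁻¹) *ᵥ x) := by
  -- both sides equal `t ⬝ᵥ α + x ⬝ᵥ β`, where `(α, β)` solves `[[Γ, Δᵀ], [Δ, O]] (α, β) = (t, x)`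
  obtain ⟨α, hα⟩ : ∃ α : κ → R, (Γ - Δᵀ * O⁻¹ * Δ) *ᵥ α = t - (Δᵀ * O⁻¹) *ᵥ x :=
    ⟨(Γ - Δᵀ * O⁻¹ * Δ)⁻¹ *ᵥ (t - (Δᵀ * O⁻¹) *ᵥ x), by
      rw [mulVec_mulVec, mul_nonsing_inv _ hΛ, one_mulVec]⟩
  obtain ⟨β, hβ⟩ : ∃ β : ι → R, β = O⁻¹ *ᵥ (x - Δ *ᵥ α) := ⟨_, rfl⟩
  have hx : Δ *ᵥ α + O *ᵥ β = x := by
    rw [hβ, mulVec_mulVec, mul_nonsing_inv _ hO, one_mulVec, add_sub_cancel]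
  have ht : Γ *ᵥ α + Δᵀ *ᵥ β = t := by
    rw [sub_mulVec, eq_sub_iff_add_eq] at hα
    rw [← hα, hβ]
    simp only [mulVec_sub, mulVec_mulVec, Matrix.mul_assoc]
    abel
  have h₁ := schur_quad_add_quad_eq_of_blocks hΓt hΓ hΨ ht hx
  have h₂ := schur_quad_add_quad_eq_of_blocks (C := Δᵀ) (t := x) (x := t) hOt hO
    (by rwa [transpose_transpose]) (by rwa [transpose_transpose, add_comm]) (by rwa [add_comm])
  rw [transpose_transpose] at h₂
  linear_combination h₁ - h₂

end Matrix

section Gaussian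

variable {ι κ : Type*} [Fintype ι] [DecidableEq ι] [Fintype κ] [DecidableEq κ]

theorem gaussPdf_mul_gaussPdf {A : Matrix ι ι ℝ} {B : Matrix κ κ ℝ} (hA : 0 ≤ A.det)
    (hB : 0 ≤ B.det) (x : ι → ℝ) (y : κ → ℝ) :
    gaussPdf A x * gaussPdf B y =
      (2 * π) ^ (-(Fintype.card ι : ℝ) / 2) * (2 * π) ^ (-(Fintype.card κ : ℝ) / 2) *
        (A.det * B.det) ^ (-(1 : ℝ) / 2) *
          Real.exp (-(1 / 2) * (x ⬝ᵥ A⁻¹ *ᵥ x + y ⬝ᵥ B⁻¹ *ᵥ y)) := by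
  rw [gaussPdf, gaussPdf, Real.mul_rpow hA hB, mul_add, Real.exp_add]
  ring

theorem gaussPdf_schur_mul_gaussPdf {O : Matrix ι ι ℝ} {Γ : Matrix κ κ ℝ} {Δ : Matrix ι κ ℝ}
    (hO : O.PosDef) (hΓ : Γ.PosDef) (hΨ : (O - Δ * Γ⁻¹ * Δᵀ).PosDef)
    (hΛ : (Γ - Δᵀ * O⁻¹ * Δ).PosDef) (x : ι → ℝ) (t : κ → ℝ) :
    gaussPdf (O - Δ * Γ⁻¹ * Δᵀ) (x - (Δ * Γ⁻¹) *ᵥ t) * gaussPdf Γ t =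
      gaussPdf O x * gaussPdf (Γ - Δᵀ * O⁻¹ * Δ) (t - (Δᵀ * O⁻¹) *ᵥ x) := by
  have hOu := (isUnit_iff_isUnit_det O).mp hO.isUnit
  have hΓu := (isUnit_iff_isUnit_det Γ).mp hΓ.isUnit
  rw [gaussPdf_mul_gaussPdf hΨ.det_pos.le hΓ.det_pos.le,
    gaussPdf_mul_gaussPdf hO.det_pos.le hΛ.det_pos.le,
    det_sub_mul_inv_mul_transpose_mul_det hOu hΓu,
    schur_quad_add_quad_eq_quad_add_schur_quad (isHermitian_iff_isSymm.mp hO.isHermitian)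
      (isHermitian_iff_isSymm.mp hΓ.isHermitian) hOu hΓu
      ((isUnit_iff_isUnit_det _).mp hΨ.isUnit) ((isUnit_iff_isUnit_det _).mp hΛ.isUnit)]

theorem gaussPdf_neg (S : Matrix ι ι ℝ) (x : ι → ℝ) : gaussPdf S (-x) = gaussPdf S x := by
  rw [gaussPdf, gaussPdf, mulVec_neg, neg_dotProduct, dotProduct_neg, neg_neg]

theorem integral_gaussPdf_lt_eq_gaussCdf (S : Matrix ι ι ℝ) (a : ι → ℝ) :
    ∫ t in {t : ι → ℝ | ∀ i, t i < a i}, gaussPdf S t = gaussCdf S a := by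
  have hae : {t : ι → ℝ | ∀ i, t i < a i} =ᵐ[volume] {t : ι → ℝ | ∀ i, t i ≤ a i} := by
    simpa [Set.pi, Set.Iic, Pi.le_def, volume_pi] using
      (Measure.univ_pi_Iio_ae_eq_Iic (μ := fun _ : ι ↦ (volume : Measure ℝ)) (f := a))
  rw [setIntegral_congr_set hae, gaussCdf]

theorem integral_gaussPdf_sub_gt_eq_gaussCdf (S : Matrix ι ι ℝ) (γ m : ι → ℝ) :
    ∫ t in {t : ι → ℝ | ∀ i, t i + γ i > 0}, gaussPdf S (t - m) = gaussCdf S (γ + m) := by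
  have hpre : (fun t ↦ m - t) ⁻¹' {u : ι → ℝ | ∀ i, u i < (γ + m) i} =
      {t : ι → ℝ | ∀ i, t i + γ i > 0} := by
    ext t
    refine forall_congr' fun i ↦ ?_
    simp only [Pi.sub_apply, Pi.add_apply]
    constructor <;> intro h <;> linarith
  rw [← integral_gaussPdf_lt_eq_gaussCdf,
    ← (Measure.measurePreserving_sub_left volume m).setIntegral_preimage_emb
      (MeasurableEquiv.subLeft m).measurableEmbedding (gaussPdf S), hpre]
  congr 1 with t
  rw [← gaussPdf_neg, neg_sub]

theorem gaussPdf_mul_mul {D S : Matrix ι ι ℝ} (hD : D.PosDef) (hS : 0 ≤ S.det) (x : ι → ℝ) :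
    gaussPdf (D * S * D) x = D.det⁻¹ * gaussPdf S (D⁻¹ *ᵥ x) := by
  have hDet : (D.det * S.det * D.det) ^ (-(1 : ℝ) / 2) = D.det⁻¹ * S.det ^ (-(1 : ℝ) / 2) := by
    rw [show D.det * S.det * D.det = D.det ^ (2 : ℝ) * S.det by rw [rpow_two]; ring,
      Real.mul_rpow (Real.rpow_nonneg hD.det_pos.le _) hS, ← Real.rpow_mul hD.det_pos.le]
    norm_num [Real.rpow_neg_one]
  have hQuad : x ⬝ᵥ (D * S * D)⁻¹ *ᵥ x = (D⁻¹ *ᵥ x) ⬝ᵥ S⁻¹ *ᵥ (D⁻¹ *ᵥ x) := by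
    rw [Matrix.mul_inv_rev, Matrix.mul_inv_rev, ← mulVec_mulVec, ← mulVec_mulVec,
      dotProduct_mulVec, ← mulVec_transpose, transpose_nonsing_inv,
      (isHermitian_iff_isSymm.mp hD.isHermitian).eq]
  rw [gaussPdf, gaussPdf, det_mul, det_mul, hDet, hQuad]
  ring

end Gaussian

section Standardization

variable {ι : Type*} [Fintype ι] [DecidableEq ι] {Ω : Matrix ι ι ℝ}

theorem matD_posDef (hΩ : Ω.PosDef) : (matD Ω).PosDef :=
  posDef_diagonal_iff.mpr fun _ ↦ Real.sqrt_pos.mpr hΩ.diag_pos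

theorem matD_mul_matCorr_mul_matD (hΩ : Ω.PosDef) : matD Ω * matCorr Ω * matD Ω = Ω := by
  have hD := (isUnit_iff_isUnit_det _).mp (matD_posDef hΩ).isUnit
  rw [matCorr]
  simp only [Matrix.mul_assoc, nonsing_inv_mul _ hD, Matrix.mul_one,
    mul_nonsing_inv_cancel_left _ _ hD]

end Standardization

theorem sun_additive_representation_general (p s : ℕ)
    (ξ : Fin p → ℝ) (Ω : Matrix (Fin p) (Fin p) ℝ) (hΩ : Ω.PosDef)
    (Δ : Matrix (Fin p) (Fin s) ℝ) (γ : Fin s → ℝ)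
    (Γ : Matrix (Fin s) (Fin s) ℝ) (hΓ : Γ.PosDef)
    (hM : (Matrix.fromBlocks Γ Δᵀ Δ (matCorr Ω)).PosDef) :
    ∀ z : Fin p → ℝ,
      ((matD Ω).det)⁻¹ *
        ∫ t in {t : Fin s → ℝ | ∀ i, t i + γ i > 0},
          gaussPdf (matCorr Ω - Δ * Γ⁻¹ * Δᵀ)
              ((matD Ω)⁻¹.mulVec (z - ξ) - (Δ * Γ⁻¹).mulVec t) *
            (gaussPdf Γ t / gaussCdf Γ γ) =
      sunPdf ξ Ω Δ γ Γ z := by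
  intro z
  have hCorr : (matCorr Ω).PosDef := hM.submatrix Sum.inr_injective
  have hM' : (fromBlocks Γ Δᵀ Δᵀᴴ (matCorr Ω)).PosDef := by simpa using hM
  have hΨ := hΓ.fromBlocks₁₁_schur hM'
  have hΛ := hCorr.fromBlocks₂₂_schur hM'
  simp only [conjTranspose_eq_transpose_of_trivial, transpose_transpose] at hΨ hΛ
  have hStd : gaussPdf Ω (z - ξ) =
      (matD Ω).det⁻¹ * gaussPdf (matCorr Ω) ((matD Ω)⁻¹ *ᵥ (z - ξ)) := by
    simpa only [matD_mul_matCorr_mul_matD hΩ] using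
      gaussPdf_mul_mul (matD_posDef hΩ) hCorr.det_pos.le (z - ξ)
  have hFactor : ∀ t, gaussPdf (matCorr Ω - Δ * Γ⁻¹ * Δᵀ)
      ((matD Ω)⁻¹ *ᵥ (z - ξ) - (Δ * Γ⁻¹) *ᵥ t) * (gaussPdf Γ t / gaussCdf Γ γ) =
        gaussPdf (matCorr Ω) ((matD Ω)⁻¹ *ᵥ (z - ξ)) / gaussCdf Γ γ *
          gaussPdf (Γ - Δᵀ * (matCorr Ω)⁻¹ * Δ)
            (t - (Δᵀ * (matCorr Ω)⁻¹) *ᵥ ((matD Ω)⁻¹ *ᵥ (z - ξ))) := fun t ↦ by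
    rw [mul_div_assoc', gaussPdf_schur_mul_gaussPdf hCorr hΓ hΨ hΛ]
    ring
  simp only [hFactor]
  rw [integral_const_mul, integral_gaussPdf_sub_gt_eq_gaussCdf, sunPdf, hStd, mulVec_mulVec]
  ring

/-- additive representation of the unified skew-normal (density form of the
sampling scheme): the density of `z = ξ + D_Ω (u₀ + Δ Γ⁻¹ u₁)`, with `u₀ ~ N(0, Ω̄ − Δ Γ⁻¹ Δᵀ)`
independent of `u₁ ~ N_s(0, Γ)` truncated componentwise below `−γ`, is the
`SUN_{p,s}(ξ, Ω, Δ, γ, Γ)` density. -/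
theorem sun_additive_representation (p s : ℕ) (hp : 1 ≤ p) (hs : 1 ≤ s)
    (ξ : Fin p → ℝ) (Ω : Matrix (Fin p) (Fin p) ℝ) (hΩ : Ω.PosDef)
    (Δ : Matrix (Fin p) (Fin s) ℝ) (γ : Fin s → ℝ)
    (Γ : Matrix (Fin s) (Fin s) ℝ) (hΓ : Γ.PosDef)
    (hM : (Matrix.fromBlocks Γ Δᵀ Δ (matCorr Ω)).PosDef)
    (hγ : 0 < gaussCdf Γ γ) :
    ∀ z : Fin p → ℝ,
      ((matD Ω).det)⁻¹ *
        ∫ t in {t : Fin s → ℝ | ∀ i, t i + γ i > 0},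
          gaussPdf (matCorr Ω - Δ * Γ⁻¹ * Δᵀ)
              ((matD Ω)⁻¹.mulVec (z - ξ) - (Δ * Γ⁻¹).mulVec t) *
            (gaussPdf Γ t / gaussCdf Γ γ) =
      sunPdf ξ Ω Δ γ Γ z :=
  sun_additive_representation_general p s ξ Ω hΩ Δ γ Γ hΓ hM
end
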